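/- Fix k ≥ 2 and m ∈ ℕ. Then Σ_{t=0}^{m} Σ_{s=0}^{k-1} ψ_{k,t} · C(m, s+t) · z^{s+t} = 1, as a polynomial identity in z (equivalently for all complex z). -/

import Mathlib

/-!
Write `f r = C(m, r) z ^ r` and `F t = ∑_{s < k} f (s + t)`. On the block `jk ≤ t < (j + 1)k`
the weight `ψ_{k,t}` is `1` at `t = jk`, `-1` at `t = jk + 1` and `0` elsewhere, so the block
contributes `F (jk) - F (jk + 1) = f (jk) - f ((j + 1)k)`. Summing over blocks telescopes to
`f 0 - f (nk) = 1` once `nk > m`, and the terms with `t > m` that the blocks add are zero.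
-/

open Finset

/-- `ψ_{k,r}`: 1 if `r ≡ 0 (mod k)`, -1 if `r ≡ 1 (mod k)`, 0 otherwise. -/
noncomputable def psi (k : ℕ) (r : ℤ) : ℂ :=
  if r % (k : ℤ) = 0 then 1 else if r % (k : ℤ) = 1 then -1 else 0

lemma sum_range_add_sub_sum_range_add_succ {M : Type*} [AddCommGroup M] (f : ℕ → M) (k a : ℕ) :
    ∑ s ∈ range k, f (s + a) - ∑ s ∈ range k, f (s + (a + 1)) = f a - f (k + a) := by
  rw [sub_eq_sub_iff_add_eq_add]
  have hlast := sum_range_succ (fun s => f (s + a)) k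
  have hfirst := sum_range_succ' (fun s => f (s + a)) k
  simp only [zero_add, add_right_comm _ 1 a, add_assoc] at hlast hfirst
  rw [← hlast, hfirst, add_comm]

section Psi

variable {k : ℕ}

lemma psi_natCast (t : ℕ) :
    psi k t = if t % k = 0 then 1 else if t % k = 1 then -1 else 0 := by
  simp only [psi, ← Int.natCast_mod, Nat.cast_eq_zero, Nat.cast_eq_one]

lemma psi_natCast_mul_add (n : ℕ) {i : ℕ} (hi : i < k) :
    psi k ↑(n * k + i) = if i = 0 then 1 else if i = 1 then -1 else 0 := by
  rw [psi_natCast, Nat.mul_add_mod_of_lt hi]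

variable {M : Type*} [AddCommGroup M] [Module ℂ M]

lemma sum_range_psi_smul_mul_add (hk : 2 ≤ k) (n : ℕ) (g : ℕ → M) :
    ∑ i ∈ range k, psi k ↑(n * k + i) • g (n * k + i) = g (n * k) - g (n * k + 1) := by
  obtain ⟨j, rfl⟩ : ∃ j, k = j + 2 := ⟨k - 2, by omega⟩
  have hrest : ∑ i ∈ range j, psi (j + 2) ↑(n * (j + 2) + (i + 1 + 1)) •
      g (n * (j + 2) + (i + 1 + 1)) = 0 :=
    sum_eq_zero fun i hi => by
      rw [psi_natCast_mul_add n (by simpa using hi)]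
      simp
  rw [sum_range_succ', sum_range_succ', hrest, psi_natCast_mul_add n (by omega),
    psi_natCast_mul_add n (by omega)]
  simp [sub_eq_add_neg, add_comm]

lemma sum_range_mul_psi_smul_sum_range (hk : 2 ≤ k) (f : ℕ → M) (n : ℕ) :
    ∑ t ∈ range (n * k), psi k t • ∑ s ∈ range k, f (s + t) = f 0 - f (n * k) := by
  induction n with
  | zero => simp
  | succ n ih =>
    rw [Nat.succ_mul, sum_range_add, ih,
      sum_range_psi_smul_mul_add hk n (fun t => ∑ s ∈ range k, f (s + t)),
      sum_range_add_sub_sum_range_add_succ, add_comm k]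
    abel

lemma sum_range_psi_smul_sum_range_of_eq_zero (hk : 2 ≤ k) {f : ℕ → M} {m : ℕ}
    (hf : ∀ r, m < r → f r = 0) :
    ∑ t ∈ range (m + 1), psi k t • ∑ s ∈ range k, f (s + t) = f 0 := by
  have hm : m < (m + 1) * k := by nlinarith
  calc _ = ∑ t ∈ range ((m + 1) * k), psi k t • ∑ s ∈ range k, f (s + t) := by
        refine sum_subset (range_subset_range.2 hm) fun t _ ht => ?_
        rw [sum_eq_zero fun s _ => hf _ (by simp at ht; omega), smul_zero]
    _ = f 0 := by rw [sum_range_mul_psi_smul_sum_range hk, hf _ hm, sub_zero]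

end Psi

theorem psi_double_sum_eq_one (k : ℕ) (hk : 2 ≤ k) (m : ℕ) (z : ℂ) :
    ∑ t ∈ Finset.range (m + 1), ∑ s ∈ Finset.range k,
      psi k t * (m.choose (s + t) : ℂ) * z ^ (s + t) = 1 := by
  have hvanish : ∀ r, m < r → (m.choose r : ℂ) * z ^ r = 0 := fun r hr => by
    rw [Nat.choose_eq_zero_of_lt hr, Nat.cast_zero, zero_mul]
  simpa [smul_eq_mul, mul_sum, mul_assoc] using
    sum_range_psi_smul_sum_range_of_eq_zero hk hvanish
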